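/- arXiv:gr-qc/9506031 — 3 statements merged into one kernel-verified Lean document; each statement's English description precedes it below -/
import Mathlib

section
/- Let R be an η-symmetric linear operator on ℝ^5 and λ ∈ ℝ. Then there do not exist vectors X1, X2, X3, X4, X5 forming a basis of ℝ^5 and satisfying the Jordan chain relations R X1 = λ X1, R X2 = λ X2 + X1, R X3 = λ X3 + X2, R X4 = λ X4 + X3, R X5 = λ X5 + X4. (A second order symmetric tensor on a 5-dimensional Lorentzian space cannot have Segre type [5].) -/
/-- The 5-dimensional Minkowski bilinear form of signature (-,+,+,+,+). -/
def eta (u v : Fin 5 → ℝ) : ℝ :=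
  -u 0 * v 0 + u 1 * v 1 + u 2 * v 2 + u 3 * v 3 + u 4 * v 4

/-!
Symmetry of `R` lets one step of the Jordan chain pass from one argument of `η` to the other,
so `η(Xᵢ, Xⱼ)` depends only on `i + j` and vanishes for `i + j ≤ 5`. Hence `X1, X2` span a
totally null plane. In Lorentzian signature no such plane exists: it would meet the spacelike
hyperplane `x₀ = 0` in a nonzero null vector.
-/

theorem LinearMap.IsAdjointPair.apply_jordanChain_eq_zero {R M : Type*} [CommRing R]
    [AddCommGroup M] [Module R M] {B : LinearMap.BilinForm R M} {T : M →ₗ[R] M}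
    (hT : B.IsAdjointPair B T T) {lam : R} {X : ℕ → M} {n : ℕ} (h0 : X 0 = 0)
    (hX : ∀ k < n, T (X (k + 1)) = lam • X (k + 1) + X k) :
    ∀ i j, i + j ≤ n → B (X i) (X j) = 0 := by
  intro i
  induction i with
  | zero => simp [h0]
  | succ i ih =>
    intro j hij
    have h := hT (X (i + 1)) (X (j + 1))
    rw [hX i (by omega), hX j (by omega)] at h
    simp only [map_add, map_smul, LinearMap.add_apply, LinearMap.smul_apply, smul_eq_mul] at h
    linear_combination h.symm + ih (j + 1) (by omega)

def etaBilin : LinearMap.BilinForm ℝ (Fin 5 → ℝ) :=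
  LinearMap.mk₂ ℝ eta (fun _ _ _ => by simp only [eta, Pi.add_apply]; ring)
    (fun _ _ _ => by simp only [eta, Pi.smul_apply, smul_eq_mul]; ring)
    (fun _ _ _ => by simp only [eta, Pi.add_apply]; ring)
    (fun _ _ _ => by simp only [eta, Pi.smul_apply, smul_eq_mul]; ring)

theorem eq_zero_of_eta_self_eq_zero {w : Fin 5 → ℝ} (hw : eta w w = 0) (hw0 : w 0 = 0) :
    w = 0 := by
  simp only [eta, hw0] at hw
  funext i
  fin_cases i <;>
    simp only [Fin.zero_eta, Fin.mk_one, Fin.reduceFinMk, Pi.zero_apply] <;>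
    nlinarith [sq_nonneg (w 1), sq_nonneg (w 2), sq_nonneg (w 3), sq_nonneg (w 4)]

theorem not_linearIndependent_of_eta_isotropic {u v : Fin 5 → ℝ} (huu : eta u u = 0)
    (huv : eta u v = 0) (hvv : eta v v = 0) : ¬ LinearIndependent ℝ ![u, v] := by
  rw [LinearIndependent.pair_iff]
  intro h
  have hw : v 0 • u + (-u 0) • v = 0 := by
    apply eq_zero_of_eta_self_eq_zero
    · simp only [eta, Pi.add_apply, Pi.smul_apply, smul_eq_mul] at huu huv hvv ⊢
      linear_combination v 0 ^ 2 * huu - 2 * u 0 * v 0 * huv + u 0 ^ 2 * hvv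
    · simp only [Pi.add_apply, Pi.smul_apply, smul_eq_mul]
      ring
  have hu : u = 0 := eq_zero_of_eta_self_eq_zero huu (by simpa using (h _ _ hw).2)
  simpa using h 1 0 (by simp [hu])

theorem no_segre_type_5 (R : (Fin 5 → ℝ) →ₗ[ℝ] (Fin 5 → ℝ))
    (hR : ∀ u v : Fin 5 → ℝ, eta (R u) v = eta u (R v)) (lam : ℝ) :
    ¬ ∃ X1 X2 X3 X4 X5 : Fin 5 → ℝ,
      (LinearIndependent ℝ ![X1, X2, X3, X4, X5] ∧
        Submodule.span ℝ {X1, X2, X3, X4, X5} = ⊤) ∧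
      R X1 = lam • X1 ∧
      R X2 = lam • X2 + X1 ∧
      R X3 = lam • X3 + X2 ∧
      R X4 = lam • X4 + X3 ∧
      R X5 = lam • X5 + X4 := by
  rintro ⟨X1, X2, X3, X4, X5, ⟨hli, -⟩, h1, h2, h3, h4, h5⟩
  set X : ℕ → Fin 5 → ℝ := fun k => [0, X1, X2, X3, X4, X5].getD k 0
  have hchain : ∀ k < 5, R (X (k + 1)) = lam • X (k + 1) + X k := by
    intro k hk
    interval_cases k <;> simpa [X]
  have hnull := (show etaBilin.IsAdjointPair etaBilin R R from hR).apply_jordanChain_eq_zero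
    (X := X) rfl hchain
  have h12 : LinearIndependent ℝ ![X1, X2] := by
    convert hli.comp ![0, 1] (by decide) using 1
    ext i; fin_cases i <;> rfl
  exact not_linearIndependent_of_eta_isotropic (hnull 1 1 (by norm_num)) (hnull 1 2 (by norm_num))
    (hnull 2 2 (by norm_num)) h12
end

section
/- Let R be an η-symmetric linear operator on ℝ^5, let α, β ∈ ℝ with β ≠ 0, and let Y, Z be vectors in ℝ^5, not both zero, satisfying R Y = α Y - β Z and R Z = β Y + α Z. Then there exist vectors x, y, z in ℝ^5 and real numbers μ1, μ2, μ3 such that R x = μ1 x, R y = μ2 y, R z = μ3 z; x, y, z are spacelike (η(x,x) > 0, η(y,y) > 0, η(z,z) > 0) and pairwise η-orthogonal; each of x, y, z is η-orthogonal to both Y and Z; and the five vectors Y, Z, x, y, z form a basis of ℝ^5. (When an η-symmetric operator has a complex eigenvalue, it is diagonalizable over ℂ and possesses three real eigenvalues with spacelike eigenvectors.) -/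
set_option maxHeartbeats 1000000

lemma eta_comm (u v : Fin 5 → ℝ) : eta u v = eta v u := by unfold eta; ring

lemma eta_add_left (u v w : Fin 5 → ℝ) : eta (u + v) w = eta u w + eta v w := by
  simp only [eta, Pi.add_apply]; ring

lemma eta_smul_left (c : ℝ) (u w : Fin 5 → ℝ) : eta (c • u) w = c * eta u w := by
  simp only [eta, Pi.smul_apply, smul_eq_mul]; ring

lemma eta_add_right (u v w : Fin 5 → ℝ) : eta u (v + w) = eta u v + eta u w := by
  simp only [eta, Pi.add_apply]; ring

lemma eta_smul_right (c : ℝ) (u w : Fin 5 → ℝ) : eta u (c • w) = c * eta u w := by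
  simp only [eta, Pi.smul_apply, smul_eq_mul]; ring

lemma eta_zero_right (u : Fin 5 → ℝ) : eta u 0 = 0 := by simp [eta]

/-- vectors orthogonal to a timelike vector are spacelike -/
lemma timelike_orth_pos (t v : Fin 5 → ℝ) (ht : eta t t < 0) (htv : eta t v = 0)
    (hv : v ≠ 0) : 0 < eta v v := by
  unfold eta at *
  have ht0 : 0 < t 0 ^ 2 - (t 1 ^ 2 + t 2 ^ 2 + t 3 ^ 2 + t 4 ^ 2) := by nlinarith
  by_cases hS : v 1 ^ 2 + v 2 ^ 2 + v 3 ^ 2 + v 4 ^ 2 = 0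
  · have h1 : v 1 = 0 := by nlinarith [sq_nonneg (v 1), sq_nonneg (v 2), sq_nonneg (v 3), sq_nonneg (v 4)]
    have h2 : v 2 = 0 := by nlinarith [sq_nonneg (v 1), sq_nonneg (v 2), sq_nonneg (v 3), sq_nonneg (v 4)]
    have h3 : v 3 = 0 := by nlinarith [sq_nonneg (v 1), sq_nonneg (v 2), sq_nonneg (v 3), sq_nonneg (v 4)]
    have h4 : v 4 = 0 := by nlinarith [sq_nonneg (v 1), sq_nonneg (v 2), sq_nonneg (v 3), sq_nonneg (v 4)]
    have ht0' : t 0 ≠ 0 := by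
      intro h; rw [h] at ht0; nlinarith [sq_nonneg (t 1), sq_nonneg (t 2), sq_nonneg (t 3), sq_nonneg (t 4)]
    have h0 : v 0 = 0 := by
      rw [h1, h2, h3, h4] at htv
      have : t 0 * v 0 = 0 := by linarith
      rcases mul_eq_zero.1 this with h | h
      · exact absurd h ht0'
      · exact h
    exact absurd (funext fun i => by fin_cases i <;> assumption) hv
  · have hS' : 0 < v 1 ^ 2 + v 2 ^ 2 + v 3 ^ 2 + v 4 ^ 2 :=
      lt_of_le_of_ne (by positivity) (Ne.symm hS)
    -- Cauchy-Schwarz for the spatial parts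
    have cs : (t 1 * v 1 + t 2 * v 2 + t 3 * v 3 + t 4 * v 4) ^ 2
        ≤ (t 1 ^ 2 + t 2 ^ 2 + t 3 ^ 2 + t 4 ^ 2) * (v 1 ^ 2 + v 2 ^ 2 + v 3 ^ 2 + v 4 ^ 2) := by
      nlinarith [sq_nonneg (t 1 * v 2 - t 2 * v 1), sq_nonneg (t 1 * v 3 - t 3 * v 1),
        sq_nonneg (t 1 * v 4 - t 4 * v 1), sq_nonneg (t 2 * v 3 - t 3 * v 2),
        sq_nonneg (t 2 * v 4 - t 4 * v 2), sq_nonneg (t 3 * v 4 - t 4 * v 3)]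
    have heq : t 0 * v 0 = t 1 * v 1 + t 2 * v 2 + t 3 * v 3 + t 4 * v 4 := by linarith
    have key : t 0 ^ 2 * v 0 ^ 2 < t 0 ^ 2 * (v 1 ^ 2 + v 2 ^ 2 + v 3 ^ 2 + v 4 ^ 2) := by
      have h1 : t 0 ^ 2 * v 0 ^ 2 = (t 0 * v 0) ^ 2 := by ring
      have h2 : (t 1 ^ 2 + t 2 ^ 2 + t 3 ^ 2 + t 4 ^ 2) * (v 1 ^ 2 + v 2 ^ 2 + v 3 ^ 2 + v 4 ^ 2)
          < t 0 ^ 2 * (v 1 ^ 2 + v 2 ^ 2 + v 3 ^ 2 + v 4 ^ 2) := by nlinarith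
      rw [h1, heq]; linarith [cs]
    have ht0sq : 0 < t 0 ^ 2 := by nlinarith [sq_nonneg (t 1), sq_nonneg (t 2), sq_nonneg (t 3), sq_nonneg (t 4)]
    nlinarith [key]

/-- two orthogonal null vectors are parallel -/
lemma null_orth_parallel (u w : Fin 5 → ℝ) (huu : eta u u = 0) (hww : eta w w = 0)
    (huw : eta u w = 0) (hu : u ≠ 0) : ∃ c : ℝ, w = c • u := by
  unfold eta at huu hww huw
  have hu0 : u 0 ≠ 0 := by
    intro h
    apply hu
    rw [h] at huu
    have h1 : u 1 = 0 := by nlinarith [sq_nonneg (u 1), sq_nonneg (u 2), sq_nonneg (u 3), sq_nonneg (u 4)]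
    have h2 : u 2 = 0 := by nlinarith [sq_nonneg (u 1), sq_nonneg (u 2), sq_nonneg (u 3), sq_nonneg (u 4)]
    have h3 : u 3 = 0 := by nlinarith [sq_nonneg (u 1), sq_nonneg (u 2), sq_nonneg (u 3), sq_nonneg (u 4)]
    have h4 : u 4 = 0 := by nlinarith [sq_nonneg (u 1), sq_nonneg (u 2), sq_nonneg (u 3), sq_nonneg (u 4)]
    funext i; fin_cases i <;> assumption
  refine ⟨w 0 / u 0, ?_⟩
  have key : (u 0 * w 1 - w 0 * u 1)^2 + (u 0 * w 2 - w 0 * u 2)^2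
      + (u 0 * w 3 - w 0 * u 3)^2 + (u 0 * w 4 - w 0 * u 4)^2 = 0 := by
    linear_combination u 0 ^ 2 * hww + w 0 ^ 2 * huu - 2 * (u 0 * w 0) * huw
  have e1 : u 0 * w 1 - w 0 * u 1 = 0 := by
    nlinarith [key, sq_nonneg (u 0 * w 1 - w 0 * u 1), sq_nonneg (u 0 * w 2 - w 0 * u 2), sq_nonneg (u 0 * w 3 - w 0 * u 3), sq_nonneg (u 0 * w 4 - w 0 * u 4)]
  have e2 : u 0 * w 2 - w 0 * u 2 = 0 := by
    nlinarith [key, sq_nonneg (u 0 * w 1 - w 0 * u 1), sq_nonneg (u 0 * w 2 - w 0 * u 2), sq_nonneg (u 0 * w 3 - w 0 * u 3), sq_nonneg (u 0 * w 4 - w 0 * u 4)]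
  have e3 : u 0 * w 3 - w 0 * u 3 = 0 := by
    nlinarith [key, sq_nonneg (u 0 * w 1 - w 0 * u 1), sq_nonneg (u 0 * w 2 - w 0 * u 2), sq_nonneg (u 0 * w 3 - w 0 * u 3), sq_nonneg (u 0 * w 4 - w 0 * u 4)]
  have e4 : u 0 * w 4 - w 0 * u 4 = 0 := by
    nlinarith [key, sq_nonneg (u 0 * w 1 - w 0 * u 1), sq_nonneg (u 0 * w 2 - w 0 * u 2), sq_nonneg (u 0 * w 3 - w 0 * u 3), sq_nonneg (u 0 * w 4 - w 0 * u 4)]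
  have c0 : w 0 = w 0 / u 0 * u 0 := by field_simp
  have c1 : w 1 = w 0 / u 0 * u 1 := by rw [div_mul_eq_mul_div, eq_div_iff hu0]; linarith
  have c2 : w 2 = w 0 / u 0 * u 2 := by rw [div_mul_eq_mul_div, eq_div_iff hu0]; linarith
  have c3 : w 3 = w 0 / u 0 * u 3 := by rw [div_mul_eq_mul_div, eq_div_iff hu0]; linarith
  have c4 : w 4 = w 0 / u 0 * u 4 := by rw [div_mul_eq_mul_div, eq_div_iff hu0]; linarith
  funext i
  simp only [Pi.smul_apply, smul_eq_mul]
  fin_cases i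
  · exact c0
  · exact c1
  · exact c2
  · exact c3
  · exact c4

lemma eta_sub_left (u v w : Fin 5 → ℝ) : eta (u - v) w = eta u w - eta v w := by
  rw [sub_eq_add_neg, eta_add_left, ← neg_one_smul ℝ v, eta_smul_left]; ring

lemma eta_sub_right (u v w : Fin 5 → ℝ) : eta u (v - w) = eta u v - eta u w := by
  rw [sub_eq_add_neg, eta_add_right, ← neg_one_smul ℝ w, eta_smul_right]; ring

/-- Spectral theorem for an operator symmetric w.r.t. a positive definite bilinear form
on an abstract finite-dimensional real vector space. -/
lemma spectral_aux {E : Type} [AddCommGroup E] [Module ℝ E] [FiniteDimensional ℝ E]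
    {n : ℕ} (hrank : Module.finrank ℝ E = n) (T : E →ₗ[ℝ] E) (B : E →ₗ[ℝ] E →ₗ[ℝ] ℝ)
    (hBsymm : ∀ u v, B u v = B v u)
    (hBpos : ∀ v, v ≠ 0 → 0 < B v v)
    (hTsym : ∀ u v, B (T u) v = B u (T v)) :
    ∃ (v : Fin n → E) (μ : Fin n → ℝ),
      (∀ i, T (v i) = μ i • v i) ∧ (∀ i, B (v i) (v i) = 1) ∧
      (∀ i j, i ≠ j → B (v i) (v j) = 0) := by
  letI core : InnerProductSpace.Core ℝ E :=
    { inner := fun u v => B u v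
      conj_inner_symm := by intro u v; simpa using hBsymm v u
      re_inner_nonneg := by
        intro v
        by_cases hv : v = 0
        · simp [hv]
        · simpa using (hBpos v hv).le
      definite := by
        intro v hv
        by_contra h
        exact absurd hv (ne_of_gt (hBpos v h))
      add_left := by intro u v w; simp
      smul_left := by intro u v r; simp }
  letI : NormedAddCommGroup E := core.toNormedAddCommGroup
  letI : InnerProductSpace ℝ E := InnerProductSpace.ofCore core.toCore
  have hsym : T.IsSymmetric := fun u v => hTsym u v
  have horth := (hsym.eigenvectorBasis hrank).orthonormal
  rw [orthonormal_iff_ite] at horth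
  exact ⟨fun i => hsym.eigenvectorBasis hrank i, fun i => hsym.eigenvalues hrank i,
    fun i => (hsym.hasEigenvector_eigenvectorBasis hrank i).apply_eq_smul,
    fun i => (horth i i).trans (if_pos rfl),
    fun i j hij => (horth i j).trans (if_neg hij)⟩

theorem complex_eigenvalue_gives_three_spacelike_eigenvectors
    (R : (Fin 5 → ℝ) →ₗ[ℝ] (Fin 5 → ℝ))
    (hR : ∀ u v : Fin 5 → ℝ, eta (R u) v = eta u (R v))
    (α β : ℝ) (hβ : β ≠ 0) (Y Z : Fin 5 → ℝ)
    (hYZ : ¬ (Y = 0 ∧ Z = 0))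
    (hY : R Y = α • Y - β • Z) (hZ : R Z = β • Y + α • Z) :
    ∃ (x y z : Fin 5 → ℝ) (μ1 μ2 μ3 : ℝ),
      R x = μ1 • x ∧ R y = μ2 • y ∧ R z = μ3 • z ∧
      eta x x > 0 ∧ eta y y > 0 ∧ eta z z > 0 ∧
      eta x y = 0 ∧ eta x z = 0 ∧ eta y z = 0 ∧
      eta x Y = 0 ∧ eta x Z = 0 ∧ eta y Y = 0 ∧ eta y Z = 0 ∧
      eta z Y = 0 ∧ eta z Z = 0 ∧
      LinearIndependent ℝ ![Y, Z, x, y, z] ∧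
      Submodule.span ℝ {Y, Z, x, y, z} = (⊤ : Submodule ℝ (Fin 5 → ℝ)) := by
  classical
  have hY0 : Y ≠ 0 := by
    intro h
    apply hYZ
    refine ⟨h, ?_⟩
    rw [h, map_zero, smul_zero, zero_sub] at hY
    have : β • Z = 0 := by rw [← neg_eq_zero, ← hY]
    exact (smul_eq_zero.1 this).resolve_left hβ
  have hZ0 : Z ≠ 0 := by
    intro h
    apply hY0
    rw [h, map_zero, smul_zero, add_zero] at hZ
    exact (smul_eq_zero.1 hZ.symm).resolve_left hβ
  have hnc : ∀ c : ℝ, Z ≠ c • Y := by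
    intro c hc
    have h1 : R Z = (c * α - c ^ 2 * β) • Y := by
      rw [hc, map_smul, hY, hc]; module
    have h2 : R Z = (β + α * c) • Y := by rw [hZ, hc]; module
    have h3 : ((β + α * c) - (c * α - c ^ 2 * β)) • Y = 0 := by
      rw [sub_smul, ← h2, ← h1, sub_self]
    have h4 : (β * (1 + c ^ 2)) • Y = 0 := by
      rw [show β * (1 + c ^ 2) = (β + α * c) - (c * α - c ^ 2 * β) by ring]
      exact h3
    have h5 : β * (1 + c ^ 2) ≠ 0 := mul_ne_zero hβ (by positivity)
    exact hY0 ((smul_eq_zero.1 h4).resolve_left h5)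
  set a := eta Y Y with ha
  set b := eta Y Z with hb
  have hZZ : eta Z Z = -a := by
    have h := hR Y Z
    rw [hY, hZ, eta_sub_left, eta_smul_left, eta_smul_left, eta_add_right,
      eta_smul_right, eta_smul_right] at h
    have h2 : β * (eta Z Z + a) = 0 := by rw [ha]; ring_nf; ring_nf at h; linarith
    have := (mul_eq_zero.1 h2).resolve_left hβ
    linarith
  have hab : ¬(a = 0 ∧ b = 0) := by
    rintro ⟨ha0, hb0⟩
    obtain ⟨c, hc⟩ := null_orth_parallel Y Z (by rw [← ha, ha0])
      (by rw [hZZ, ha0, neg_zero]) (by rw [← hb, hb0]) hY0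
    exact hnc c hc
  have expand : ∀ p q : ℝ, eta (p • Y + q • Z) (p • Y + q • Z)
      = p ^ 2 * a + 2 * p * q * b - q ^ 2 * a := by
    intro p q
    simp only [eta_add_left, eta_add_right, eta_smul_left, eta_smul_right]
    rw [hZZ, eta_comm Z Y, ← ha, ← hb]
    ring
  obtain ⟨p, q, hpq⟩ : ∃ p q : ℝ, eta (p • Y + q • Z) (p • Y + q • Z) < 0 := by
    rcases lt_trichotomy a 0 with h | h | h
    · exact ⟨1, 0, by rw [expand]; nlinarith⟩
    · have hb0 : b ≠ 0 := fun hb0 => hab ⟨h, hb0⟩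
      exact ⟨1, -b, by rw [expand, h]; nlinarith [mul_self_pos.2 hb0]⟩
    · exact ⟨0, 1, by rw [expand]; nlinarith⟩
  set t : Fin 5 → ℝ := p • Y + q • Z with htdef
  have htv : ∀ v : Fin 5 → ℝ, eta Y v = 0 → eta Z v = 0 → eta t v = 0 := by
    intro v h1 h2
    rw [htdef, eta_add_left, eta_smul_left, eta_smul_left, h1, h2]; ring
  set φ : (Fin 5 → ℝ) →ₗ[ℝ] ℝ × ℝ :=
    { toFun := fun v => (eta Y v, eta Z v)
      map_add' := by intro u v; simp [Prod.ext_iff, eta_add_right]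
      map_smul' := by intro c v; simp [Prod.ext_iff, eta_smul_right] } with hφ
  set W : Submodule ℝ (Fin 5 → ℝ) := LinearMap.ker φ with hW
  have hmem : ∀ v : Fin 5 → ℝ, v ∈ W ↔ eta Y v = 0 ∧ eta Z v = 0 := by
    intro v
    rw [hW, LinearMap.mem_ker, hφ]
    simp [Prod.ext_iff]
  have hab2 : a ^ 2 + b ^ 2 ≠ 0 := by
    intro h
    exact hab ⟨by nlinarith [sq_nonneg a, sq_nonneg b], by nlinarith [sq_nonneg a, sq_nonneg b]⟩
  have hsurj : Function.Surjective φ := by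
    rintro ⟨s, u⟩
    refine ⟨((s * a + u * b) / (a ^ 2 + b ^ 2)) • Y + ((s * b - u * a) / (a ^ 2 + b ^ 2)) • Z, ?_⟩
    have e1 : eta Y (((s * a + u * b) / (a ^ 2 + b ^ 2)) • Y
        + ((s * b - u * a) / (a ^ 2 + b ^ 2)) • Z) = s := by
      rw [eta_add_right, eta_smul_right, eta_smul_right, ← ha, ← hb]
      field_simp
      ring
    have e2 : eta Z (((s * a + u * b) / (a ^ 2 + b ^ 2)) • Y
        + ((s * b - u * a) / (a ^ 2 + b ^ 2)) • Z) = u := by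
      rw [eta_add_right, eta_smul_right, eta_smul_right, eta_comm Z Y, hZZ, ← hb]
      field_simp
      ring
    show (eta Y _, eta Z _) = (s, u)
    rw [e1, e2]
  have hrank : Module.finrank ℝ ↥W = 3 := by
    have h1 := LinearMap.finrank_range_add_finrank_ker φ
    rw [LinearMap.range_eq_top.2 hsurj, finrank_top, Module.finrank_fin_fun] at h1
    have h2 : Module.finrank ℝ (ℝ × ℝ) = 2 := by
      simp [Module.finrank_prod]
    rw [h2, ← hW] at h1
    omega
  have hinv : ∀ v ∈ W, R v ∈ W := by
    intro v hv
    rw [hmem] at hv ⊢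
    obtain ⟨h1, h2⟩ := hv
    constructor
    · rw [← hR Y v, hY, eta_sub_left, eta_smul_left, eta_smul_left, h1, h2]; ring
    · rw [← hR Z v, hZ, eta_add_left, eta_smul_left, eta_smul_left, h1, h2]; ring
  set T : ↥W →ₗ[ℝ] ↥W := R.restrict hinv with hT
  have hpos : ∀ v : ↥W, v ≠ 0 → 0 < eta ↑v ↑v := by
    intro v hv
    have hm := (hmem ↑v).1 v.2
    refine timelike_orth_pos t ↑v hpq (htv ↑v hm.1 hm.2) ?_
    intro h
    exact hv (Subtype.ext h)
  set B : ↥W →ₗ[ℝ] ↥W →ₗ[ℝ] ℝ := LinearMap.mk₂ ℝ (fun u v => eta ↑u ↑v)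
    (fun u u' v => by simp [eta_add_left])
    (fun c u v => by simp [eta_smul_left])
    (fun u v v' => by simp [eta_add_right])
    (fun c u v => by simp [eta_smul_right]) with hBdef
  obtain ⟨v, μ, hEig, hNorm, hOrth⟩ := spectral_aux hrank T B
    (fun u v => eta_comm ↑u ↑v) hpos
    (fun u v => hR ↑u ↑v)
  set x : Fin 5 → ℝ := ↑(v 0) with hx
  set y : Fin 5 → ℝ := ↑(v 1) with hy
  set z : Fin 5 → ℝ := ↑(v 2) with hz
  have hREig : ∀ i, R ↑(v i) = μ i • (↑(v i) : Fin 5 → ℝ) := by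
    intro i
    have := congrArg Subtype.val (hEig i)
    simpa [hT] using this
  have hNorm' : ∀ i, eta ↑(v i) ↑(v i) = 1 := hNorm
  have hOrth' : ∀ i j, i ≠ j → eta (↑(v i) : Fin 5 → ℝ) ↑(v j) = 0 := hOrth
  have hWmem : ∀ i, eta Y ↑(v i) = 0 ∧ eta Z ↑(v i) = 0 := fun i => (hmem _).1 (v i).2
  have hposE : ∀ i, (0:ℝ) < eta ↑(v i) ↑(v i) := by
    intro i; rw [hNorm' i]; norm_num
  -- orthogonality to Y and Z, commuted
  have hxY : eta x Y = 0 := (eta_comm _ _).trans (hWmem 0).1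
  have hxZ : eta x Z = 0 := (eta_comm _ _).trans (hWmem 0).2
  have hyY : eta y Y = 0 := (eta_comm _ _).trans (hWmem 1).1
  have hyZ : eta y Z = 0 := (eta_comm _ _).trans (hWmem 1).2
  have hzY : eta z Y = 0 := (eta_comm _ _).trans (hWmem 2).1
  have hzZ : eta z Z = 0 := (eta_comm _ _).trans (hWmem 2).2
  have hxy : eta x y = 0 := hOrth' 0 1 (by decide)
  have hxz : eta x z = 0 := hOrth' 0 2 (by decide)
  have hyz : eta y z = 0 := hOrth' 1 2 (by decide)
  have hyx : eta y x = 0 := (eta_comm _ _).trans hxy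
  have hzx : eta z x = 0 := (eta_comm _ _).trans hxz
  have hzy : eta z y = 0 := (eta_comm _ _).trans hyz
  have hLI : LinearIndependent ℝ ![Y, Z, x, y, z] := by
    rw [Fintype.linearIndependent_iff]
    intro g hg
    rw [Fin.sum_univ_five] at hg
    simp only [Matrix.cons_val_zero, Matrix.cons_val_one, Matrix.head_cons,
      Matrix.cons_val_two, Matrix.tail_cons, Matrix.cons_val_three,
      Matrix.cons_val_four] at hg
    have e2 : g 2 = 0 := by
      have h := congrArg (eta x) hg
      simp only [eta_add_right, eta_smul_right, eta_zero_right, hxY, hxZ, hxy, hxz,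
        hNorm' 0, ← hx] at h
      rw [hx, hNorm' 0] at h; linarith
    have e3 : g 3 = 0 := by
      have h := congrArg (eta y) hg
      simp only [eta_add_right, eta_smul_right, eta_zero_right, hyY, hyZ, hyx, hyz,
        hNorm' 1, ← hy] at h
      rw [hy, hNorm' 1] at h; linarith
    have e4 : g 4 = 0 := by
      have h := congrArg (eta z) hg
      simp only [eta_add_right, eta_smul_right, eta_zero_right, hzY, hzZ, hzx, hzy,
        hNorm' 2, ← hz] at h
      rw [hz, hNorm' 2] at h; linarith
    rw [e2, e3, e4, zero_smul, zero_smul, zero_smul, add_zero, add_zero, add_zero] at hg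
    have e1 : g 1 = 0 := by
      by_contra hg1
      apply hnc (-(g 0) / g 1)
      have h' : g 1 • Z = (-(g 0)) • Y := by
        rw [neg_smul]
        exact eq_neg_of_add_eq_zero_right hg
      rw [div_eq_inv_mul, mul_smul]
      rw [← h', inv_smul_smul₀ hg1]
    rw [e1, zero_smul, add_zero] at hg
    have e0 : g 0 = 0 := by
      rcases smul_eq_zero.1 hg with h | h
      · exact h
      · exact absurd h hY0
    intro i
    fin_cases i
    · exact e0
    · exact e1
    · exact e2
    · exact e3
    · exact e4
  have hspan : Submodule.span ℝ {Y, Z, x, y, z} = (⊤ : Submodule ℝ (Fin 5 → ℝ)) := by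
    have hcard : Fintype.card (Fin 5) = Module.finrank ℝ (Fin 5 → ℝ) := by
      simp [Module.finrank_fin_fun]
    have h := hLI.span_eq_top_of_card_eq_finrank hcard
    have hr : Set.range ![Y, Z, x, y, z] = {Y, Z, x, y, z} := by
      ext w
      simp [Matrix.range_cons, Matrix.range_empty]
      tauto
    rwa [hr] at h
  exact ⟨x, y, z, μ 0, μ 1, μ 2, hREig 0, hREig 1, hREig 2,
    hposE 0, hposE 1, hposE 2, hxy, hxz, hyz,
    hxY, hxZ, hyY, hyZ, hzY, hzZ, hLI, hspan⟩
end

section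
/- Let Y and Z be linearly independent vectors in ℝ^5 with η(Y,Y) ≠ 0 and η(Y, Y) + η(Z, Z) = 0. Then there exist real numbers ρ > 0 and θ such that the vectors Y' = ρ cos θ • Y - ρ sin θ • Z and Z' = ρ cos θ • Z + ρ sin θ • Y satisfy η(Y', Y') = 0, η(Z', Z') = 0 and η(Y', Z') = 1. (A timelike eigenplane of a complex eigenvalue contains a normalized pair of real null directions.) -/
namespace LinearMap.BilinForm

variable {M : Type*} [AddCommGroup M] [Module ℝ M] {B : LinearMap.BilinForm ℝ M}

section Rotation

variable (hB : B.IsSymm) (Y Z : M) (c s : ℝ)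
include hB

theorem IsSymm.apply_sub_smul_self :
    B (c • Y - s • Z) (c • Y - s • Z) = c ^ 2 * B Y Y - 2 * c * s * B Y Z + s ^ 2 * B Z Z := by
  simp only [map_sub, map_smul, LinearMap.sub_apply, LinearMap.smul_apply, smul_eq_mul,
    hB.eq Z Y]
  ring

theorem IsSymm.apply_add_smul_self :
    B (c • Z + s • Y) (c • Z + s • Y) = s ^ 2 * B Y Y + 2 * c * s * B Y Z + c ^ 2 * B Z Z := by
  simp only [map_add, map_smul, LinearMap.add_apply, LinearMap.smul_apply, smul_eq_mul,
    hB.eq Z Y]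
  ring

theorem IsSymm.apply_sub_smul_add_smul :
    B (c • Y - s • Z) (c • Z + s • Y) = c * s * (B Y Y - B Z Z) + (c ^ 2 - s ^ 2) * B Y Z := by
  simp only [map_sub, map_add, map_smul, LinearMap.sub_apply, LinearMap.smul_apply, smul_eq_mul,
    hB.eq Z Y]
  ring

end Rotation

theorem IsSymm.exists_rotation_null_pair (hB : B.IsSymm) {Y Z : M}
    (hYZ : B Y Y ≠ 0 ∨ B Y Z ≠ 0) (hsum : B Y Y + B Z Z = 0) :
    ∃ ρ θ : ℝ, 0 < ρ ∧
      B ((ρ * Real.cos θ) • Y - (ρ * Real.sin θ) • Z)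
          ((ρ * Real.cos θ) • Y - (ρ * Real.sin θ) • Z) = 0 ∧
      B ((ρ * Real.cos θ) • Z + (ρ * Real.sin θ) • Y)
          ((ρ * Real.cos θ) • Z + (ρ * Real.sin θ) • Y) = 0 ∧
      B ((ρ * Real.cos θ) • Y - (ρ * Real.sin θ) • Z)
          ((ρ * Real.cos θ) • Z + (ρ * Real.sin θ) • Y) = 1 := by
  set z : ℂ := ⟨B Y Y, B Y Z⟩
  have hz : z ≠ 0 := fun h => by simp_all [z, Complex.ext_iff]
  obtain ⟨u, hu⟩ := IsAlgClosed.exists_pow_nat_eq (Complex.I / z) two_pos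
  have hu_sq_mul : u ^ 2 * z = Complex.I := by rw [hu, div_mul_cancel₀ _ hz]
  have hu0 : u ≠ 0 := by rintro rfl; simp [eq_comm] at hu_sq_mul
  obtain ⟨hre, him⟩ := Complex.ext_iff.1 hu_sq_mul
  simp only [sq, Complex.mul_re, Complex.mul_im, Complex.I_re, Complex.I_im, z] at hre him
  refine ⟨‖u‖, Complex.arg u, norm_pos_iff.2 hu0, ?_⟩
  rw [Complex.norm_mul_cos_arg, Complex.norm_mul_sin_arg, hB.apply_sub_smul_self,
    hB.apply_add_smul_self, hB.apply_sub_smul_add_smul]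
  refine ⟨?_, ?_, ?_⟩
  · linear_combination hre + u.im ^ 2 * hsum
  · linear_combination -hre + u.re ^ 2 * hsum
  · linear_combination him - u.re * u.im * hsum

end LinearMap.BilinForm

theorem etaBilin_isSymm : etaBilin.IsSymm :=
  ⟨fun u v => by simp only [etaBilin, LinearMap.mk₂_apply, eta]; ring⟩

theorem timelike_plane_null_pair_general (Y Z : Fin 5 → ℝ)
    (hY : eta Y Y ≠ 0) (hsum : eta Y Y + eta Z Z = 0) :
    ∃ ρ θ : ℝ, 0 < ρ ∧
      eta ((ρ * Real.cos θ) • Y - (ρ * Real.sin θ) • Z)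
          ((ρ * Real.cos θ) • Y - (ρ * Real.sin θ) • Z) = 0 ∧
      eta ((ρ * Real.cos θ) • Z + (ρ * Real.sin θ) • Y)
          ((ρ * Real.cos θ) • Z + (ρ * Real.sin θ) • Y) = 0 ∧
      eta ((ρ * Real.cos θ) • Y - (ρ * Real.sin θ) • Z)
          ((ρ * Real.cos θ) • Z + (ρ * Real.sin θ) • Y) = 1 :=
  etaBilin_isSymm.exists_rotation_null_pair (Or.inl hY) hsum

theorem timelike_plane_null_pair (Y Z : Fin 5 → ℝ)
    (hind : LinearIndependent ℝ ![Y, Z])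
    (hY : eta Y Y ≠ 0) (hsum : eta Y Y + eta Z Z = 0) :
    ∃ ρ θ : ℝ, 0 < ρ ∧
      eta ((ρ * Real.cos θ) • Y - (ρ * Real.sin θ) • Z)
          ((ρ * Real.cos θ) • Y - (ρ * Real.sin θ) • Z) = 0 ∧
      eta ((ρ * Real.cos θ) • Z + (ρ * Real.sin θ) • Y)
          ((ρ * Real.cos θ) • Z + (ρ * Real.sin θ) • Y) = 0 ∧
      eta ((ρ * Real.cos θ) • Y - (ρ * Real.sin θ) • Z)
          ((ρ * Real.cos θ) • Z + (ρ * Real.sin θ) • Y) = 1 :=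
  timelike_plane_null_pair_general Y Z hY hsum
end
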